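/- Let $F(u)=u+\tfrac12$ for $u<-\tfrac12$, $F(u)=0$ for $|u|\le\tfrac12$, $F(u)=u-\tfrac12$ for $u>\tfrac12$, and let $G$ be the right-continuous inverse of $F$, namely $G(v)=v-\tfrac12$ for $v<0$ and $G(v)=v+\tfrac12$ for $v\ge 0$. Define $\bar g(v)=\frac14\int_{-2}^{2}G(v-\psi_0(y))\,dy$, where $\psi_0$ is the triangle wave of period 4 defined by $\psi_0(x)=-x-2$ on $[-2,-1]$, $\psi_0(x)=x$ on $[-1,1]$, $\psi_0(x)=-x+2$ on $[1,2]$. Then $\bar g$ is continuous, strictly increasing, and its inverse $\bar f$ satisfies $\bar f(u)=u+\tfrac12$ for $u<-\tfrac32$, $\bar f(u)=\tfrac23 u$ for $-\tfrac32\le u\le \tfrac32$, and $\bar f(u)=u-\tfrac12$ for $u>\tfrac32$. -/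

import Mathlib

open MeasureTheory Set

lemma stmt8_seg {f : ℝ → ℝ} (a b c s k : ℝ) (hab : a ≤ b)
    (h : ∀ y, a < y → y ≤ b → y ≠ c → f y = s * y + k) :
    IntervalIntegrable f volume a b ∧
      (∫ y in a..b, f y) = s * (b^2 - a^2)/2 + k * (b - a) := by
  have hc : ∀ᵐ y : ℝ ∂volume, y ≠ c := by
    refine ae_iff.mpr ?_
    simpa using measure_singleton (μ := (volume : Measure ℝ)) c
  have hmeq : ∀ᵐ y ∂(volume : Measure ℝ), y ∈ Set.uIoc a b → f y = s * y + k := by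
    filter_upwards [hc] with y hy hmem
    rw [Set.uIoc_of_le hab] at hmem
    exact h y hmem.1 hmem.2 hy
  have hgint : IntervalIntegrable (fun y => s * y + k) volume a b :=
    ((continuous_const.mul continuous_id).add continuous_const).intervalIntegrable a b
  constructor
  · rw [intervalIntegrable_iff] at hgint ⊢
    have heq : f =ᵐ[volume.restrict (Set.uIoc a b)] (fun y => s * y + k) :=
      (ae_restrict_iff' measurableSet_uIoc).mpr hmeq
    exact hgint.congr heq.symm
  · rw [intervalIntegral.integral_congr_ae hmeq,
      intervalIntegral.integral_add (intervalIntegral.intervalIntegrable_id.const_mul s)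
        intervalIntegrable_const,
      intervalIntegral.integral_const_mul, integral_id, intervalIntegral.integral_const]
    simp only [smul_eq_mul]; ring

/-- For the Stefan-type generalized inverse `G` (`G v = v - 1/2` for
`v < 0`, `G v = v + 1/2` for `v ≥ 0`) and the 4-periodic triangle wave `ψ₀`,
the average `ḡ(v) = (1/4) ∫_{-2}^{2} G(v - ψ₀(y)) dy` is continuous and strictly
increasing, and its inverse `f̄` satisfies `f̄(u) = u + 1/2` for `u < -3/2`,
`f̄(u) = (2/3)u` for `-3/2 ≤ u ≤ 3/2`, and `f̄(u) = u - 1/2` for `u > 3/2`. -/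
theorem stmt_8 (G : ℝ → ℝ)
    (hG₁ : ∀ v : ℝ, v < 0 → G v = v - 1/2)
    (hG₂ : ∀ v : ℝ, 0 ≤ v → G v = v + 1/2)
    (ψ₀ : ℝ → ℝ) (hper : ∀ x : ℝ, ψ₀ (x + 4) = ψ₀ x)
    (h₁ : ∀ x ∈ Icc (-2 : ℝ) (-1), ψ₀ x = -x - 2)
    (h₂ : ∀ x ∈ Icc (-1 : ℝ) 1, ψ₀ x = x)
    (h₃ : ∀ x ∈ Icc (1 : ℝ) 2, ψ₀ x = -x + 2)
    (gbar : ℝ → ℝ)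
    (hgbar : ∀ v : ℝ, gbar v = (1/4) * ∫ y in (-2 : ℝ)..2, G (v - ψ₀ y)) :
    Continuous gbar ∧ StrictMono gbar ∧
    ∃ fbar : ℝ → ℝ, (∀ u : ℝ, gbar (fbar u) = u) ∧ (∀ v : ℝ, fbar (gbar v) = v) ∧
      (∀ u : ℝ, u < -(3/2) → fbar u = u + 1/2) ∧
      (∀ u ∈ Icc (-(3/2) : ℝ) (3/2), fbar u = (2/3) * u) ∧
      (∀ u : ℝ, (3/2 : ℝ) < u → fbar u = u - 1/2) := by
  have key : ∀ v : ℝ, gbar v = v + (max (-1) (min v 1)) / 2 := by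
    intro v
    rw [hgbar]
    rcases lt_or_ge v (-1) with hv | hv
    · -- v < -1 : integrand is on the negative branch everywhere
      obtain ⟨i1, e1⟩ := stmt8_seg (f := fun y => G (v - ψ₀ y)) (-2) (-1) 42 1 (v + 3/2)
        (by norm_num) (fun y hy1 hy2 _ => by
          show G (v - ψ₀ y) = _
          rw [h₁ y ⟨hy1.le, hy2⟩, hG₁ _ (by linarith : v - (-y - 2) < 0)]; ring)
      obtain ⟨i2, e2⟩ := stmt8_seg (f := fun y => G (v - ψ₀ y)) (-1) 1 42 (-1) (v - 1/2)
        (by norm_num) (fun y hy1 hy2 _ => by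
          show G (v - ψ₀ y) = _
          rw [h₂ y ⟨hy1.le, hy2⟩, hG₁ _ (by linarith : v - y < 0)]; ring)
      obtain ⟨i3, e3⟩ := stmt8_seg (f := fun y => G (v - ψ₀ y)) 1 2 42 1 (v - 5/2)
        (by norm_num) (fun y hy1 hy2 _ => by
          show G (v - ψ₀ y) = _
          rw [h₃ y ⟨hy1.le, hy2⟩, hG₁ _ (by linarith : v - (-y + 2) < 0)]; ring)
      rw [← intervalIntegral.integral_add_adjacent_intervals (i1.trans i2) i3,
        ← intervalIntegral.integral_add_adjacent_intervals i1 i2, e1, e2, e3,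
        min_eq_left (by linarith : v ≤ 1), max_eq_left (by linarith : v ≤ -1)]
      ring
    · rcases lt_or_ge v 0 with hv0 | hv0
      · -- -1 ≤ v < 0 : five segments
        obtain ⟨i1, e1⟩ := stmt8_seg (f := fun y => G (v - ψ₀ y)) (-2) (-2 - v) (-2 - v) 1
          (v + 3/2) (by linarith) (fun y hy1 hy2 hyne => by
            show G (v - ψ₀ y) = _
            rw [h₁ y ⟨hy1.le, by linarith⟩, hG₁ _ (by
              rcases lt_or_eq_of_le hy2 with h | h
              · linarith
              · exact absurd h hyne)]; ring)
        obtain ⟨i2, e2⟩ := stmt8_seg (f := fun y => G (v - ψ₀ y)) (-2 - v) (-1) 42 1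
          (v + 5/2) (by linarith) (fun y hy1 hy2 _ => by
            show G (v - ψ₀ y) = _
            rw [h₁ y ⟨by linarith, hy2⟩, hG₂ _ (by linarith : (0:ℝ) ≤ v - (-y - 2))]; ring)
        obtain ⟨i3, e3⟩ := stmt8_seg (f := fun y => G (v - ψ₀ y)) (-1) v 42 (-1)
          (v + 1/2) (by linarith) (fun y hy1 hy2 _ => by
            show G (v - ψ₀ y) = _
            rw [h₂ y ⟨hy1.le, by linarith⟩, hG₂ _ (by linarith : (0:ℝ) ≤ v - y)]; ring)
        obtain ⟨i4, e4⟩ := stmt8_seg (f := fun y => G (v - ψ₀ y)) v 1 42 (-1)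
          (v - 1/2) (by linarith) (fun y hy1 hy2 _ => by
            show G (v - ψ₀ y) = _
            rw [h₂ y ⟨by linarith, hy2⟩, hG₁ _ (by linarith : v - y < 0)]; ring)
        obtain ⟨i5, e5⟩ := stmt8_seg (f := fun y => G (v - ψ₀ y)) 1 2 42 1
          (v - 5/2) (by norm_num) (fun y hy1 hy2 _ => by
            show G (v - ψ₀ y) = _
            rw [h₃ y ⟨hy1.le, hy2⟩, hG₁ _ (by linarith : v - (-y + 2) < 0)]; ring)
        rw [← intervalIntegral.integral_add_adjacent_intervals
            ((((i1.trans i2).trans i3).trans i4)) i5,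
          ← intervalIntegral.integral_add_adjacent_intervals ((i1.trans i2).trans i3) i4,
          ← intervalIntegral.integral_add_adjacent_intervals (i1.trans i2) i3,
          ← intervalIntegral.integral_add_adjacent_intervals i1 i2, e1, e2, e3, e4, e5,
          min_eq_left (by linarith : v ≤ 1), max_eq_right (by linarith : (-1:ℝ) ≤ v)]
        ring
      · rcases lt_or_ge v 1 with hv1 | hv1
        · -- 0 ≤ v < 1 : five segments
          obtain ⟨i1, e1⟩ := stmt8_seg (f := fun y => G (v - ψ₀ y)) (-2) (-1) 42 1
            (v + 5/2) (by norm_num) (fun y hy1 hy2 _ => by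
              show G (v - ψ₀ y) = _
              rw [h₁ y ⟨hy1.le, hy2⟩, hG₂ _ (by linarith : (0:ℝ) ≤ v - (-y - 2))]; ring)
          obtain ⟨i2, e2⟩ := stmt8_seg (f := fun y => G (v - ψ₀ y)) (-1) v 42 (-1)
            (v + 1/2) (by linarith) (fun y hy1 hy2 _ => by
              show G (v - ψ₀ y) = _
              rw [h₂ y ⟨hy1.le, by linarith⟩, hG₂ _ (by linarith : (0:ℝ) ≤ v - y)]; ring)
          obtain ⟨i3, e3⟩ := stmt8_seg (f := fun y => G (v - ψ₀ y)) v 1 42 (-1)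
            (v - 1/2) (by linarith) (fun y hy1 hy2 _ => by
              show G (v - ψ₀ y) = _
              rw [h₂ y ⟨by linarith, hy2⟩, hG₁ _ (by linarith : v - y < 0)]; ring)
          obtain ⟨i4, e4⟩ := stmt8_seg (f := fun y => G (v - ψ₀ y)) 1 (2 - v) (2 - v) 1
            (v - 5/2) (by linarith) (fun y hy1 hy2 hyne => by
              show G (v - ψ₀ y) = _
              rw [h₃ y ⟨hy1.le, by linarith⟩, hG₁ _ (by
                rcases lt_or_eq_of_le hy2 with h | h
                · linarith
                · exact absurd h hyne)]; ring)
          obtain ⟨i5, e5⟩ := stmt8_seg (f := fun y => G (v - ψ₀ y)) (2 - v) 2 42 1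
            (v - 3/2) (by linarith) (fun y hy1 hy2 _ => by
              show G (v - ψ₀ y) = _
              rw [h₃ y ⟨by linarith, hy2⟩, hG₂ _ (by linarith : (0:ℝ) ≤ v - (-y + 2))]; ring)
          rw [← intervalIntegral.integral_add_adjacent_intervals
              ((((i1.trans i2).trans i3).trans i4)) i5,
            ← intervalIntegral.integral_add_adjacent_intervals ((i1.trans i2).trans i3) i4,
            ← intervalIntegral.integral_add_adjacent_intervals (i1.trans i2) i3,
            ← intervalIntegral.integral_add_adjacent_intervals i1 i2, e1, e2, e3, e4, e5,
            min_eq_left (by linarith : v ≤ 1), max_eq_right (by linarith : (-1:ℝ) ≤ v)]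
          ring
        · -- 1 ≤ v : positive branch everywhere
          obtain ⟨i1, e1⟩ := stmt8_seg (f := fun y => G (v - ψ₀ y)) (-2) (-1) 42 1
            (v + 5/2) (by norm_num) (fun y hy1 hy2 _ => by
              show G (v - ψ₀ y) = _
              rw [h₁ y ⟨hy1.le, hy2⟩, hG₂ _ (by linarith : (0:ℝ) ≤ v - (-y - 2))]; ring)
          obtain ⟨i2, e2⟩ := stmt8_seg (f := fun y => G (v - ψ₀ y)) (-1) 1 42 (-1)
            (v + 1/2) (by norm_num) (fun y hy1 hy2 _ => by
              show G (v - ψ₀ y) = _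
              rw [h₂ y ⟨hy1.le, hy2⟩, hG₂ _ (by linarith : (0:ℝ) ≤ v - y)]; ring)
          obtain ⟨i3, e3⟩ := stmt8_seg (f := fun y => G (v - ψ₀ y)) 1 2 42 1
            (v - 3/2) (by norm_num) (fun y hy1 hy2 _ => by
              show G (v - ψ₀ y) = _
              rw [h₃ y ⟨hy1.le, hy2⟩, hG₂ _ (by linarith : (0:ℝ) ≤ v - (-y + 2))]; ring)
          rw [← intervalIntegral.integral_add_adjacent_intervals (i1.trans i2) i3,
            ← intervalIntegral.integral_add_adjacent_intervals i1 i2, e1, e2, e3,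
            min_eq_right (by linarith : (1:ℝ) ≤ v), max_eq_right (by norm_num : (-1:ℝ) ≤ 1)]
          ring
  have hmono : StrictMono gbar := by
    intro a b hab
    rw [key a, key b]
    have hm : max (-1) (min a 1) ≤ max (-1) (min b 1) :=
      max_le_max le_rfl (min_le_min hab.le le_rfl)
    linarith
  refine ⟨?_, hmono, ?_⟩
  · have hfun : gbar = fun v => v + (max (-1) (min v 1)) / 2 := funext key
    rw [hfun]
    exact continuous_id.add
      ((continuous_const.max (continuous_id.min continuous_const)).div_const 2)
  · set fbar : ℝ → ℝ :=
      fun u => if u < -(3/2) then u + 1/2 else if u ≤ 3/2 then (2/3) * u else u - 1/2 with hf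
    have hleft : ∀ u : ℝ, gbar (fbar u) = u := by
      intro u
      rcases lt_or_ge u (-(3/2)) with h | h
      · rw [hf]
        simp only
        rw [if_pos h, key, min_eq_left (by linarith : u + 1/2 ≤ 1),
          max_eq_left (by linarith : u + 1/2 ≤ -1)]
        ring
      · rcases le_or_gt u (3/2) with h2 | h2
        · rw [hf]
          simp only
          rw [if_neg (not_lt.mpr h), if_pos h2, key,
            min_eq_left (by linarith : (2/3) * u ≤ 1),
            max_eq_right (by linarith : (-1:ℝ) ≤ (2/3) * u)]
          ring
        · rw [hf]
          simp only
          rw [if_neg (not_lt.mpr h), if_neg (not_le.mpr h2), key,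
            min_eq_right (by linarith : (1:ℝ) ≤ u - 1/2),
            max_eq_right (by norm_num : (-1:ℝ) ≤ 1)]
          ring
    refine ⟨fbar, hleft, fun v => hmono.injective (hleft (gbar v)), ?_, ?_, ?_⟩
    · intro u hu; rw [hf]; simp only; rw [if_pos hu]
    · intro u hu
      rw [hf]; simp only
      rw [if_neg (not_lt.mpr (by linarith [hu.1])), if_pos hu.2]
    · intro u hu
      rw [hf]; simp only
      rw [if_neg (not_lt.mpr (by linarith)), if_neg (not_le.mpr hu)]
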